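/- Let k ≥ 1 be an integer, α ≥ 0, and let f = h + conj(g) ∈ G^k_H(α), with coefficients a_n, b_n (n ≥ k+1). Then for every n ≥ k+1: (i) |a_n| + |b_n| ≤ 2/(1 + (n−1)α); (ii) ||a_n| − |b_n|| ≤ 2/(1 + (n−1)α); (iii) |a_n| ≤ 2/(1 + (n−1)α). -/

import Mathlib

/-!
For `‖ε‖ ≤ 1` put `P_ε = (1 - α) h / z + α h' + ε ((1 - α) g / z + α g')`. The defining
inequality of the class gives `Re P_ε ≥ 0` on the disk, and
`P_ε z = 1 + ∑_{m ≥ 1} (1 + m α) (a_{m+1} + ε b_{m+1}) z ^ m`. Carathéodory's lemma bounds every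
coefficient of such a series by `2`, so `(1 + (n - 1) α) ‖a_n + ε b_n‖ ≤ 2`; choosing `ε` so that
`ε b_n` has the argument of `a_n` gives (i), and (ii), (iii) follow from (i).

Carathéodory's lemma is proved by averaging `F = ∑ c_m z ^ m` over the circle `‖z‖ = r` against
the kernel `2 + v / z ^ n + conj (v / z ^ n) = 2 + 2 Re (v / z ^ n)`, which is nonnegative when
`‖v‖ ≤ r ^ n`. Cauchy's formula and the mean value property evaluate the average as
`2 c_0 + v c_n`, so its real part is nonnegative; take `v = -r ^ n conj (c_n) / ‖c_n‖` and let
`r → 1`.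
-/

open Complex Metric Filter Topology FormalMultilinearSeries Real
open scoped NNReal ComplexConjugate

section PowerSeries

variable {c : ℕ → ℂ} {F : ℂ → ℂ} {R : ℝ≥0} {r : ℝ}

theorem hasFPowerSeriesOnBall_ofScalars_of_hasSum (hR : 0 < R)
    (hF : ∀ z ∈ ball (0 : ℂ) R, HasSum (fun n ↦ c n * z ^ n) (F z)) :
    HasFPowerSeriesOnBall F (ofScalars ℂ c) 0 R where
  r_le := by
    refine ENNReal.le_of_forall_nnreal_lt fun r hr ↦ ?_
    have hr : ((r : ℝ) : ℂ) ∈ ball (0 : ℂ) R := by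
      simpa [abs_of_nonneg r.coe_nonneg] using (show (r : ℝ) < R by exact_mod_cast hr)
    refine (ofScalars ℂ c).le_radius_of_tendsto (l := 0) ?_
    simpa [ofScalars_norm, abs_of_nonneg r.coe_nonneg] using
      (hF _ hr).summable.tendsto_atTop_zero.norm
  r_pos := by exact_mod_cast hR
  hasSum {y} hy := by
    rw [eball_coe] at hy
    simpa [ofScalars_apply_eq, mul_comm] using hF y hy

theorem HasFPowerSeriesOnBall.hasSum_deriv (hF : HasFPowerSeriesOnBall F (ofScalars ℂ c) 0 R)
    {z : ℂ} (hz : z ∈ ball (0 : ℂ) R) :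
    HasSum (fun n ↦ (n + 1) * c (n + 1) * z ^ n) (deriv F z) := by
  have h := (ContinuousLinearMap.apply ℂ ℂ (1 : ℂ)).hasSum
    (hF.fderiv.hasSum (y := z) (by rwa [eball_coe]))
  simp only [zero_add, ContinuousLinearMap.apply_apply, apply_eq_pow_smul_coeff] at h
  simpa [coeff_ofScalars, mul_comm, mul_left_comm, mul_assoc] using h

theorem HasFPowerSeriesOnBall.hasSum_div (hF : HasFPowerSeriesOnBall F (ofScalars ℂ c) 0 R)
    (hc : c 0 = 0) {z : ℂ} (hz : z ∈ ball (0 : ℂ) R) (hz0 : z ≠ 0) :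
    HasSum (fun n ↦ c (n + 1) * z ^ n) (F z / z) := by
  have h := (hasSum_nat_add_iff' 1).mpr (hF.hasSum (y := z) (by rwa [eball_coe]))
  simp only [zero_add, ofScalars_apply_eq, smul_eq_mul, Finset.range_one, Finset.sum_singleton,
    hc, zero_mul, sub_zero] at h
  simpa [pow_succ, ← mul_assoc, mul_div_assoc, hz0] using h.div_const z

theorem HasFPowerSeriesOnBall.hasSum_sub_mul_div_add_mul_deriv
    (hF : HasFPowerSeriesOnBall F (ofScalars ℂ c) 0 R) (hc : c 0 = 0) (α : ℂ)
    {z : ℂ} (hz : z ∈ ball (0 : ℂ) R) (hz0 : z ≠ 0) :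
    HasSum (fun n ↦ (1 + n * α) * c (n + 1) * z ^ n) ((1 - α) * (F z / z) + α * deriv F z) := by
  have h := ((hF.hasSum_div hc hz hz0).mul_left (1 - α)).add ((hF.hasSum_deriv hz).mul_left α)
  exact h.congr_fun fun n ↦ by ring

theorem HasFPowerSeriesOnBall.differentiableOn_closedBall
    (hF : HasFPowerSeriesOnBall F (ofScalars ℂ c) 0 R) (hrR : r < R) :
    DifferentiableOn ℂ F (closedBall 0 r) :=
  hF.differentiableOn.mono fun z hz ↦ by
    rw [eball_coe, mem_ball_zero_iff]
    exact (mem_closedBall_zero_iff.mp hz).trans_lt hrR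

theorem HasFPowerSeriesOnBall.iteratedDeriv_eq_factorial_mul_coeff
    (hF : HasFPowerSeriesOnBall F (ofScalars ℂ c) 0 R) (n : ℕ) :
    iteratedDeriv n F 0 = n.factorial * c n := by
  rw [iteratedDeriv_eq_iteratedFDeriv, ← hF.factorial_smul, ofScalars_apply_eq]
  simp [nsmul_eq_mul]

theorem HasFPowerSeriesOnBall.circleAverage_div_pow
    (hF : HasFPowerSeriesOnBall F (ofScalars ℂ c) 0 R) (hr : 0 < r) (hrR : r < R) (n : ℕ) :
    circleAverage (fun z ↦ F z / z ^ n) 0 r = c n := by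
  have hcauchy := ((hF.differentiableOn_closedBall hrR).diffContOnCl_ball subset_rfl
    ).circleIntegral_one_div_sub_center_pow_smul hr n
  rw [circleAverage_eq_circleIntegral hr.ne']
  simp only [sub_zero, smul_eq_mul] at hcauchy ⊢
  have hfun : (fun z : ℂ ↦ z⁻¹ * (F z / z ^ n)) = fun z ↦ 1 / z ^ (n + 1) * F z := by
    funext z; ring
  rw [hfun, hcauchy, hF.iteratedDeriv_eq_factorial_mul_coeff]
  field_simp [n.factorial_ne_zero]

theorem HasFPowerSeriesOnBall.circleAverage_pow_mul
    (hF : HasFPowerSeriesOnBall F (ofScalars ℂ c) 0 R) (hr : 0 < r) (hrR : r < R) {n : ℕ}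
    (hn : n ≠ 0) :
    circleAverage (fun z ↦ z ^ n * F z) 0 r = 0 := by
  have hd : DifferentiableOn ℂ (fun z ↦ z ^ n * F z) (closedBall 0 |r|) := by
    rw [abs_of_pos hr]
    exact (differentiableOn_pow n).mul (hF.differentiableOn_closedBall hrR)
  simp [(hd.diffContOnCl_ball subset_rfl).circleAverage, hn]

theorem div_pow_add_conj_mul_pow_div_of_mem_sphere {z : ℂ} (hr : r ≠ 0)
    (hz : z ∈ sphere (0 : ℂ) r) (v : ℂ) (n : ℕ) :
    v / z ^ n + conj v * z ^ n / r ^ (2 * n) = ((2 * (v / z ^ n).re : ℝ) : ℂ) := by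
  have hz0 : z ≠ 0 := ne_zero_of_mem_sphere hr ⟨z, hz⟩
  have hconj : conj z = r ^ 2 / z := by
    rw [eq_div_iff hz0, conj_mul', mem_sphere_zero_iff_norm.mp hz]
  have hr' : (r : ℂ) ≠ 0 := ofReal_ne_zero.mpr hr
  have hconj_div : conj (v / z ^ n) = conj v * z ^ n / r ^ (2 * n) := by
    rw [map_div₀, map_pow, hconj, div_pow, ← pow_mul]
    field_simp
  rw [← hconj_div, add_conj]

theorem HasFPowerSeriesOnBall.circleAverage_mul_kernel
    (hF : HasFPowerSeriesOnBall F (ofScalars ℂ c) 0 R) (hr : 0 < r) (hrR : r < R) {n : ℕ}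
    (hn : n ≠ 0) (v : ℂ) :
    circleAverage (fun z ↦ F z * (2 + v / z ^ n + conj v * z ^ n / r ^ (2 * n))) 0 r
      = 2 * c 0 + v * c n := by
  have hcont : ContinuousOn F (sphere 0 r) :=
    (hF.differentiableOn_closedBall hrR).continuousOn.mono sphere_subset_closedBall
  have hne : ∀ z ∈ sphere (0 : ℂ) r, z ^ n ≠ 0 := fun z hz ↦
    pow_ne_zero _ (ne_zero_of_mem_sphere hr.ne' ⟨z, hz⟩)
  have hint₁ : CircleIntegrable (fun z ↦ (2 : ℂ) • F z) 0 r :=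
    (hcont.const_smul (2 : ℂ)).circleIntegrable hr.le
  have hint₂ : CircleIntegrable (fun z ↦ v • (F z / z ^ n)) 0 r :=
    ((hcont.div (continuousOn_pow n) hne).const_smul v).circleIntegrable hr.le
  have hint₃ : CircleIntegrable (fun z ↦ (conj v / r ^ (2 * n)) • (z ^ n * F z)) 0 r :=
    (((continuousOn_pow n).mul hcont).const_smul (conj v / r ^ (2 * n))).circleIntegrable hr.le
  have hsplit : (fun z ↦ F z * (2 + v / z ^ n + conj v * z ^ n / r ^ (2 * n))) = fun z ↦
      ((2 : ℂ) • F z + v • (F z / z ^ n)) + (conj v / r ^ (2 * n)) • (z ^ n * F z) := by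
    funext z; simp only [smul_eq_mul]; ring
  have hc0 : circleAverage F 0 r = c 0 := by
    simpa using hF.circleAverage_div_pow hr hrR 0
  rw [hsplit, circleAverage_fun_add (f₁ := fun z ↦ (2 : ℂ) • F z + v • (F z / z ^ n))
    (hint₁.add hint₂) hint₃, circleAverage_fun_add hint₁ hint₂,
    circleAverage_fun_smul, circleAverage_fun_smul, circleAverage_fun_smul, hc0,
    hF.circleAverage_div_pow hr hrR, hF.circleAverage_pow_mul hr hrR hn]
  simp

theorem HasFPowerSeriesOnBall.two_mul_re_coeff_zero_add_re_mul_coeff_nonneg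
    (hF : HasFPowerSeriesOnBall F (ofScalars ℂ c) 0 R) (hre : ∀ z ∈ ball (0 : ℂ) R, 0 ≤ (F z).re)
    (hr : 0 < r) (hrR : r < R) {n : ℕ} (hn : n ≠ 0) {v : ℂ} (hv : ‖v‖ ≤ r ^ n) :
    0 ≤ 2 * (c 0).re + (v * c n).re := by
  set K : ℂ → ℂ := fun z ↦ 2 + v / z ^ n + conj v * z ^ n / r ^ (2 * n)
  have hK : ContinuousOn K (sphere 0 r) := by
    refine (continuousOn_const.add (continuousOn_const.div (continuousOn_pow n) ?_)).add
      (by fun_prop)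
    exact fun z hz ↦ pow_ne_zero _ (ne_zero_of_mem_sphere hr.ne' ⟨z, hz⟩)
  have hint : CircleIntegrable (fun z ↦ F z * K z) 0 r :=
    (((hF.differentiableOn_closedBall hrR).continuousOn.mono sphere_subset_closedBall).mul
      hK).circleIntegrable hr.le
  rw [show 2 * (c 0).re + (v * c n).re = (2 * c 0 + v * c n).re by simp,
    ← hF.circleAverage_mul_kernel hr hrR hn v, ← reCLM_apply,
    ← reCLM.circleAverage_comp_comm hint]
  refine circleAverage_nonneg_of_nonneg fun z hz ↦ ?_
  rw [abs_of_pos hr] at hz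
  have hz' : ‖z‖ = r := mem_sphere_zero_iff_norm.mp hz
  have hvz : ‖v / z ^ n‖ ≤ 1 := by
    rw [norm_div, norm_pow, hz']
    exact div_le_one_of_le₀ hv (by positivity)
  simp only [Function.comp_apply, reCLM_apply, K, add_assoc,
    div_pow_add_conj_mul_pow_div_of_mem_sphere hr.ne' hz, ← ofReal_ofNat, ← ofReal_add,
    re_mul_ofReal]
  exact mul_nonneg (hre z (mem_ball_zero_iff.mpr (hz'.trans_lt hrR)))
    (by linarith [neg_le_of_abs_le ((abs_re_le_norm (v / z ^ n)).trans hvz)])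

theorem HasFPowerSeriesOnBall.norm_coeff_mul_pow_le
    (hF : HasFPowerSeriesOnBall F (ofScalars ℂ c) 0 R) (hre : ∀ z ∈ ball (0 : ℂ) R, 0 ≤ (F z).re)
    {n : ℕ} (hn : n ≠ 0) :
    ‖c n‖ * R ^ n ≤ 2 * (c 0).re := by
  have hbound : ∀ r ∈ Set.Ioo 0 (R : ℝ), ‖c n‖ * r ^ n ≤ 2 * (c 0).re := by
    rintro r ⟨hr, hrR⟩
    set u : ℂ := Complex.exp (↑(-arg (c n)) * I)
    have hu : ‖u‖ = 1 := norm_exp_ofReal_mul_I _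
    have huc : u * c n = ‖c n‖ := by
      conv_lhs => rw [← norm_mul_exp_arg_mul_I (c n)]
      rw [mul_left_comm, ← Complex.exp_add]
      push_cast
      simp
    have h := hF.two_mul_re_coeff_zero_add_re_mul_coeff_nonneg hre hr hrR hn
      (v := -(r ^ n : ℂ) * u) (by simp [hu, abs_of_pos hr])
    rw [mul_assoc, huc, ← ofReal_pow, ← ofReal_neg, ← ofReal_mul, ofReal_re] at h
    linarith
  have hlim : Tendsto (fun r : ℝ ↦ ‖c n‖ * r ^ n) (𝓝[<] (R : ℝ)) (𝓝 (‖c n‖ * R ^ n)) :=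
    ((continuous_const.mul (continuous_pow n)).tendsto _).mono_left nhdsWithin_le_nhds
  exact le_of_tendsto hlim
    (mem_of_superset (Ioo_mem_nhdsLT (by exact_mod_cast hF.r_pos)) hbound)

end PowerSeries

theorem exists_norm_le_one_norm_add_mul_eq (a b : ℂ) :
    ∃ ε : ℂ, ‖ε‖ ≤ 1 ∧ ‖a + ε * b‖ = ‖a‖ + ‖b‖ := by
  refine ⟨Complex.exp (↑(arg a - arg b) * I), (norm_exp_ofReal_mul_I _).le, ?_⟩
  have hsum : a + Complex.exp (↑(arg a - arg b) * I) * b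
      = ↑(‖a‖ + ‖b‖) * Complex.exp (arg a * I) :=
    calc _ = ‖a‖ * Complex.exp (arg a * I)
          + Complex.exp (↑(arg a - arg b) * I) * (‖b‖ * Complex.exp (arg b * I)) := by
          rw [norm_mul_exp_arg_mul_I, norm_mul_exp_arg_mul_I]
      _ = ↑(‖a‖ + ‖b‖) * Complex.exp (arg a * I) := by
          rw [mul_left_comm, ← Complex.exp_add]
          push_cast
          ring_nf
  rw [hsum, norm_mul, norm_exp_ofReal_mul_I, mul_one, norm_real,
    Real.norm_of_nonneg (by positivity)]

theorem norm_mul_coeff_add_mul_coeff_le_two {α : ℂ} {h g : ℂ → ℂ} {a b : ℕ → ℂ}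
    (ha0 : a 0 = 0) (ha1 : a 1 = 1) (hb0 : b 0 = 0) (hb1 : b 1 = 0)
    (hh : HasFPowerSeriesOnBall h (ofScalars ℂ a) 0 (1 : ℝ≥0))
    (hg : HasFPowerSeriesOnBall g (ofScalars ℂ b) 0 (1 : ℝ≥0))
    (hmem : ∀ z ∈ ball (0 : ℂ) 1, z ≠ 0 →
      ‖(1 - α) * (g z / z) + α * deriv g z‖ ≤ ((1 - α) * (h z / z) + α * deriv h z).re)
    {ε : ℂ} (hε : ‖ε‖ ≤ 1) {n : ℕ} (hn : n ≠ 0) :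
    ‖(1 + n * α) * (a (n + 1) + ε * b (n + 1))‖ ≤ 2 := by
  set d : ℕ → ℂ := fun m ↦ (1 + m * α) * (a (m + 1) + ε * b (m + 1))
  have hd0 : d 0 = 1 := by simp [d, ha1, hb1]
  -- `h z / z` is `0` at `z = 0`, where the series takes the value `d 0 = 1`.
  set P : ℂ → ℂ := Function.update (fun z ↦ ((1 - α) * (h z / z) + α * deriv h z)
    + ε * ((1 - α) * (g z / z) + α * deriv g z)) 0 1
  have hP : HasFPowerSeriesOnBall P (ofScalars ℂ d) 0 (1 : ℝ≥0) := by
    refine hasFPowerSeriesOnBall_ofScalars_of_hasSum one_pos fun z hz ↦ ?_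
    rcases eq_or_ne z 0 with rfl | hz0
    · simpa [P, hd0] using hasSum_single (f := fun m ↦ d m * 0 ^ m) 0 (by simp +contextual)
    · simp only [P, Function.update_of_ne hz0]
      exact ((hh.hasSum_sub_mul_div_add_mul_deriv ha0 α hz hz0).add
        ((hg.hasSum_sub_mul_div_add_mul_deriv hb0 α hz hz0).mul_left ε)).congr_fun
        fun m ↦ by ring
  have hre : ∀ z ∈ ball (0 : ℂ) (1 : ℝ≥0), 0 ≤ (P z).re := by
    intro z hz
    rcases eq_or_ne z 0 with rfl | hz0
    · simp [P]
    simp only [P, Function.update_of_ne hz0]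
    rw [add_re]
    set B := (1 - α) * (g z / z) + α * deriv g z
    have hεB : ‖ε * B‖ ≤ ‖B‖ := by
      rw [norm_mul]; exact mul_le_of_le_one_left (norm_nonneg _) hε
    linarith [neg_le_of_abs_le (abs_re_le_norm (ε * B)), hmem z (by simpa using hz) hz0]
  simpa [d, hd0] using hP.norm_coeff_mul_pow_le hre hn

theorem stmt_13_general
    (k : ℕ) (hk : 1 ≤ k) (α : ℝ) (hα : 0 ≤ α)
    (h g : ℂ → ℂ) (a b : ℕ → ℂ)
    (ha0 : a 0 = 0) (ha1 : a 1 = 1)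
    (hbk : ∀ n : ℕ, n ≤ k → b n = 0)
    (hh : ∀ z ∈ Metric.ball (0:ℂ) 1, HasSum (fun n : ℕ => a n * z ^ n) (h z))
    (hg : ∀ z ∈ Metric.ball (0:ℂ) 1, HasSum (fun n : ℕ => b n * z ^ n) (g z))
    (hmem : ∀ z ∈ Metric.ball (0:ℂ) 1, z ≠ 0 →
      ‖(1 - (α:ℂ)) * (g z / z) + (α:ℂ) * deriv g z‖
        < ((1 - (α:ℂ)) * (h z / z) + (α:ℂ) * deriv h z).re) :
    ∀ n : ℕ, k + 1 ≤ n →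
      ‖a n‖ + ‖b n‖ ≤ 2 / (1 + ((n:ℝ) - 1) * α) ∧
      |‖a n‖ - ‖b n‖| ≤ 2 / (1 + ((n:ℝ) - 1) * α) ∧
      ‖a n‖ ≤ 2 / (1 + ((n:ℝ) - 1) * α) := by
  intro n hn
  obtain ⟨m, rfl⟩ : ∃ m, n = m + 1 := ⟨n - 1, by omega⟩
  have hweight : (1 + ((↑(m + 1) : ℝ) - 1) * α) = 1 + m * α := by push_cast; ring
  obtain ⟨ε, hε, hnorm⟩ := exists_norm_le_one_norm_add_mul_eq (a (m + 1)) (b (m + 1))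
  have hbound := norm_mul_coeff_add_mul_coeff_le_two ha0 ha1 (hbk 0 (by omega)) (hbk 1 hk)
    (hasFPowerSeriesOnBall_ofScalars_of_hasSum one_pos (by simpa using hh))
    (hasFPowerSeriesOnBall_ofScalars_of_hasSum one_pos (by simpa using hg))
    (fun z hz hz0 ↦ (hmem z hz hz0).le) hε (show m ≠ 0 by omega)
  have hsum : ‖a (m + 1)‖ + ‖b (m + 1)‖ ≤ 2 / (1 + ((↑(m + 1) : ℝ) - 1) * α) := by
    rw [hweight, le_div_iff₀' (by positivity), ← hnorm]
    simpa [norm_mul, ← ofReal_natCast, ← ofReal_mul, ← ofReal_one, ← ofReal_add,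
      abs_of_nonneg (show 0 ≤ 1 + m * α by positivity)] using hbound
  refine ⟨hsum, ?_, (le_add_of_nonneg_right (norm_nonneg _)).trans hsum⟩
  exact (abs_sub_le_iff.mpr ⟨by linarith [norm_nonneg (b (m + 1))],
    by linarith [norm_nonneg (a (m + 1))]⟩).trans hsum

theorem stmt_13
    (k : ℕ) (hk : 1 ≤ k) (α : ℝ) (hα : 0 ≤ α)
    (h g : ℂ → ℂ) (a b : ℕ → ℂ)
    (ha0 : a 0 = 0) (ha1 : a 1 = 1)
    (hak : ∀ n : ℕ, 2 ≤ n → n ≤ k → a n = 0)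
    (hbk : ∀ n : ℕ, n ≤ k → b n = 0)
    (hh : ∀ z ∈ Metric.ball (0:ℂ) 1, HasSum (fun n : ℕ => a n * z ^ n) (h z))
    (hg : ∀ z ∈ Metric.ball (0:ℂ) 1, HasSum (fun n : ℕ => b n * z ^ n) (g z))
    (hmem : ∀ z ∈ Metric.ball (0:ℂ) 1, z ≠ 0 →
      ‖(1 - (α:ℂ)) * (g z / z) + (α:ℂ) * deriv g z‖
        < ((1 - (α:ℂ)) * (h z / z) + (α:ℂ) * deriv h z).re) :
    ∀ n : ℕ, k + 1 ≤ n →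
      ‖a n‖ + ‖b n‖ ≤ 2 / (1 + ((n:ℝ) - 1) * α) ∧
      |‖a n‖ - ‖b n‖| ≤ 2 / (1 + ((n:ℝ) - 1) * α) ∧
      ‖a n‖ ≤ 2 / (1 + ((n:ℝ) - 1) * α) :=
  stmt_13_general k hk α hα h g a b ha0 ha1 hbk hh hg hmem
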